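/- arXiv:2205.10832 — 3 statements merged into one kernel-verified Lean document; each statement's English description precedes it below -/
import Mathlib

section
/- Let f : [0,∞) → ℝ be a continuous, positive, differentiable function, n a natural number, k > 0, and α real, satisfying f'(t) + (α − k·f(t)ⁿ)·f(t) ≤ 0 for all t > 0, and α − k·f(0)ⁿ > 0. Then f(t) < f(0) for all t > 0. -/
/-- Lemma 2.4: if `f` is continuous, positive, differentiable, satisfies
`f' + (α - k fⁿ) f ≤ 0` for `t > 0` and `α - k f(0)ⁿ > 0`, then `f(t) < f(0)` for `t > 0`. -/
theorem nonlinear_comparison (f : ℝ → ℝ) (n : ℕ) (k α : ℝ) (hk : 0 < k)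
    (hcont : Continuous f) (hpos : ∀ t ≥ (0:ℝ), 0 < f t) (hdiff : Differentiable ℝ f)
    (hineq : ∀ t > (0:ℝ), deriv f t + (α - k * f t ^ n) * f t ≤ 0)
    (hinit : α - k * f 0 ^ n > 0) :
    ∀ t > (0:ℝ), f t < f 0 := by
  set g : ℝ → ℝ := fun t => α - k * f t ^ n with hg
  have hgcont : Continuous g := by
    apply Continuous.sub continuous_const
    exact continuous_const.mul (hcont.pow n)
  have h0 : 0 < g 0 := hinit
  -- derivative is negative wherever g is positive
  have hderiv : ∀ t > (0:ℝ), 0 < g t → deriv f t < 0 := by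
    intro t ht hgt
    have h1 := hineq t ht
    have h2 : 0 < g t * f t := mul_pos hgt (hpos t ht.le)
    simp only [hg] at h2
    nlinarith
  -- monotonicity of g along f: if f s ≤ f 0 then g s ≥ g 0
  have hgmono : ∀ s ≥ (0:ℝ), f s ≤ f 0 → 0 < g s := by
    intro s hs hle
    have : f s ^ n ≤ f 0 ^ n := pow_le_pow_left₀ (hpos s hs).le hle n
    have : k * f s ^ n ≤ k * f 0 ^ n := by
      exact mul_le_mul_of_nonneg_left this hk.le
    simp only [hg]
    linarith
  -- find δ > 0 with g positive on [0, δ]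
  obtain ⟨ε, hεpos, hε⟩ : ∃ ε > 0, ∀ t, |t| < ε → 0 < g t := by
    have hopen : IsOpen (g ⁻¹' Set.Ioi 0) := (isOpen_Ioi).preimage hgcont
    have hmem : (0:ℝ) ∈ g ⁻¹' Set.Ioi 0 := h0
    rw [Metric.isOpen_iff] at hopen
    obtain ⟨ε, hεpos, hball⟩ := hopen 0 hmem
    exact ⟨ε, hεpos, fun t ht => hball (by simpa [Real.dist_eq] using ht)⟩
  set δ : ℝ := ε / 2 with hδ
  have hδpos : 0 < δ := by positivity
  have hδg : ∀ t ∈ Set.Icc (0:ℝ) δ, 0 < g t := by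
    intro t ht
    apply hε
    rw [abs_of_nonneg ht.1]
    linarith [ht.2]
  -- f strictly decreasing on [0, δ]
  have anti1 : StrictAntiOn f (Set.Icc 0 δ) := by
    apply strictAntiOn_of_deriv_neg (convex_Icc _ _) hcont.continuousOn
    intro x hx
    rw [interior_Icc] at hx
    exact hderiv x hx.1 (hδg x ⟨hx.1.le, hx.2.le⟩)
  have step2 : ∀ t ∈ Set.Ioc (0:ℝ) δ, f t < f 0 := by
    intro t ht
    exact anti1 ⟨le_refl 0, hδpos.le⟩ ⟨ht.1.le, ht.2⟩ ht.1
  intro t ht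
  by_contra hcontra
  push_neg at hcontra
  rcases le_or_gt t δ with htδ | htδ
  · exact absurd (step2 t ⟨ht, htδ⟩) (not_lt.mpr hcontra)
  -- t > δ : first crossing argument
  set A : Set ℝ := {s | s ∈ Set.Icc δ t ∧ f 0 ≤ f s} with hA
  have hAne : A.Nonempty := ⟨t, ⟨htδ.le, le_refl t⟩, hcontra⟩
  have hAclosed : IsClosed A := by
    have : A = Set.Icc δ t ∩ f ⁻¹' Set.Ici (f 0) := rfl
    rw [this]
    exact isClosed_Icc.inter (isClosed_Ici.preimage hcont)
  have hAbdd : BddBelow A := ⟨δ, fun s hs => hs.1.1⟩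
  set T := sInf A with hT
  have hTA : T ∈ A := hAclosed.csInf_mem hAne hAbdd
  obtain ⟨⟨hTδ, hTt⟩, hTf⟩ := hTA
  have hTδ' : δ < T := by
    rcases lt_or_eq_of_le hTδ with h | h
    · exact h
    · exfalso
      have := step2 δ ⟨hδpos, le_refl δ⟩
      rw [← h] at hTf
      linarith
  -- on (δ, T), f < f 0
  have key : ∀ s ∈ Set.Ioo δ T, f s < f 0 := by
    intro s hs
    by_contra h'
    push_neg at h'
    have hsA : s ∈ A := ⟨⟨hs.1.le, le_trans hs.2.le hTt⟩, h'⟩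
    have : T ≤ s := csInf_le hAbdd hsA
    linarith [hs.2]
  have anti2 : StrictAntiOn f (Set.Icc δ T) := by
    apply strictAntiOn_of_deriv_neg (convex_Icc _ _) hcont.continuousOn
    intro x hx
    rw [interior_Icc] at hx
    have hx0 : 0 < x := lt_trans hδpos hx.1
    exact hderiv x hx0 (hgmono x hx0.le (key x hx).le)
  have hfT : f T < f δ := anti2 ⟨le_refl δ, hTδ'.le⟩ ⟨hTδ, le_refl T⟩ hTδ'
  have hfδ : f δ < f 0 := step2 δ ⟨hδpos, le_refl δ⟩
  linarith
end

section
/- Let f : [0,∞) → ℝ be a continuous, positive, differentiable function, n a natural number, k > 0, α real, with f'(t) + (α − k·f(t)ⁿ)·f(t) ≤ 0 for all t > 0 and α − k·f(0)ⁿ > 0. Then α − k·f(t)ⁿ > 0 for all t ≥ 0. -/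
/-- Persistence of the smallness condition in Lemma 2.4: under
`f' + (α - k fⁿ) f ≤ 0` and `α - k f(0)ⁿ > 0`, we have `α - k f(t)ⁿ > 0` for all `t ≥ 0`. -/
theorem smallness_persists (f : ℝ → ℝ) (n : ℕ) (k α : ℝ) (hk : 0 < k)
    (hcont : Continuous f) (hpos : ∀ t ≥ (0:ℝ), 0 < f t) (hdiff : Differentiable ℝ f)
    (hineq : ∀ t > (0:ℝ), deriv f t + (α - k * f t ^ n) * f t ≤ 0)
    (hinit : α - k * f 0 ^ n > 0) :
    ∀ t ≥ (0:ℝ), α - k * f t ^ n > 0 := by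
  by_contra h
  push_neg at h
  obtain ⟨T, hT0, hTle⟩ := h
  set g : ℝ → ℝ := fun t => α - k * f t ^ n with hg
  have hgc : Continuous g := by continuity
  set S : Set ℝ := {t : ℝ | 0 ≤ t} ∩ {t : ℝ | g t ≤ 0} with hS
  have hScl : IsClosed S :=
    (isClosed_le continuous_const continuous_id).inter (isClosed_le hgc continuous_const)
  have hTS : T ∈ S := ⟨hT0, hTle⟩
  have hne : S.Nonempty := ⟨T, hTS⟩
  have hbdd : BddBelow S := ⟨0, fun x hx => hx.1⟩
  set t₀ := sInf S with ht₀
  have ht₀S : t₀ ∈ S := hScl.csInf_mem hne hbdd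
  have ht₀0 : 0 ≤ t₀ := ht₀S.1
  have hgt₀ : g t₀ ≤ 0 := ht₀S.2
  have ht₀pos : 0 < t₀ := by
    rcases lt_or_eq_of_le ht₀0 with h | h
    · exact h
    · exfalso; rw [← h] at hgt₀; exact absurd hinit (not_lt.mpr hgt₀)
  have hbefore : ∀ t, 0 ≤ t → t < t₀ → 0 < g t := by
    intro t ht htlt
    by_contra hc
    push_neg at hc
    exact absurd (csInf_le hbdd ⟨ht, hc⟩) (not_le.mpr htlt)
  -- f is antitone on [0, t₀]
  have hanti : AntitoneOn f (Set.Icc 0 t₀) := by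
    apply antitoneOn_of_deriv_nonpos (convex_Icc 0 t₀) hcont.continuousOn hdiff.differentiableOn
    intro x hx
    rw [interior_Icc] at hx
    have hgx : 0 < g x := hbefore x hx.1.le hx.2
    have hfx : 0 < f x := hpos x hx.1.le
    simp only [hg] at hgx
    have h2 := hineq x hx.1
    have hp := mul_pos hgx hfx
    show deriv f x ≤ 0
    linarith
  have hle : f t₀ ≤ f 0 := hanti (Set.left_mem_Icc.mpr ht₀0) (Set.right_mem_Icc.mpr ht₀0) ht₀0
  have hpow : f t₀ ^ n ≤ f 0 ^ n := pow_le_pow_left₀ (hpos t₀ ht₀0).le hle n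
  have : 0 < g t₀ := by
    have : k * f t₀ ^ n ≤ k * f 0 ^ n := by nlinarith
    simp only [hg]; linarith
  linarith
end

section
/- Let f ∈ H⁴(Ω) ∩ H¹₀(Ω) on a bounded domain Ω with Δf = 0 on ∂Ω, and suppose a > 0 satisfies a·‖g‖² ≤ ‖∇g‖² for all g ∈ H¹₀(Ω). Then ‖∂_{x₁}Δf‖² ≤ ‖∇Δf‖² ≤ ‖Δ²f‖·‖Δf‖, and hence a·‖∂_{x₁}Δf‖² ≤ ‖Δ²f‖². -/
/-!
The first inequality is pointwise. For the second, `g = Δf` vanishes on `∂Ω`, so Green's identity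
`∫_Ω |∇g|² = -∫_Ω g Δg` and Cauchy–Schwarz give `‖∇g‖² ≤ ‖Δg‖ ‖g‖`; together with the Poincaré
inequality this yields `a ‖g‖ ≤ ‖Δg‖`, hence the third.

As `Ω` is an arbitrary bounded open set, Green's identity is proved without any boundary
regularity: integrate by parts against the Lipschitz cutoffs `θₖ = clamp (k d(x, Ωᶜ) - 1) 0 1`.
A `C¹` function vanishing on `∂Ω` is `O(d(x, Ωᶜ))`, which compensates `|∇θₖ| ≤ k` on the layer
`k d(x, Ωᶜ) ≤ 2` where `∇θₖ` lives, so the boundary term tends to `0` by dominated convergence.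
-/

open MeasureTheory Real Set

/-- Pointwise Laplacian of `f : (Fin n → ℝ) → ℝ`. -/
noncomputable def laplacian {n : ℕ} (f : (Fin n → ℝ) → ℝ) (x : Fin n → ℝ) : ℝ :=
  ∑ i, fderiv ℝ (fun y => fderiv ℝ f y (Pi.single i 1)) x (Pi.single i 1)

open Metric Filter Topology

theorem IsOpen.infDist_compl_pos {X : Type*} [PseudoMetricSpace X] {s : Set X} (hs : IsOpen s)
    (hs' : s ≠ univ) {x : X} (hx : x ∈ s) : 0 < infDist x sᶜ :=
  (hs.isClosed_compl.notMem_iff_infDist_pos (nonempty_compl.2 hs')).1 (not_not_intro hx)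

theorem Continuous.integrableOn_of_isBounded {X F : Type*} [MetricSpace X] [ProperSpace X]
    [MeasurableSpace X] [OpensMeasurableSpace X] {μ : Measure X} [IsFiniteMeasureOnCompacts μ]
    [NormedAddCommGroup F] {f : X → F} (hf : Continuous f) {s : Set X}
    (hs : Bornology.IsBounded s) : IntegrableOn f s μ :=
  (hf.continuousOn.integrableOn_compact hs.isCompact_closure).mono_set subset_closure

noncomputable def distCutoff {X : Type*} [PseudoMetricSpace X] (s : Set X) (k : ℕ) (x : X) : ℝ :=
  max 0 (min 1 (k * infDist x sᶜ - 1))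

namespace distCutoff

section PseudoMetricSpace
variable {X : Type*} [PseudoMetricSpace X] {s : Set X} {k : ℕ} {x : X}

theorem lipschitzWith : LipschitzWith k (distCutoff s k) := by
  have h : LipschitzWith k (fun x => k * infDist x sᶜ - 1) := by
    refine LipschitzWith.of_dist_le_mul fun x y => ?_
    rw [Real.dist_eq, sub_sub_sub_cancel_right, ← mul_sub, abs_mul, Nat.abs_cast,
      ← Real.dist_eq, NNReal.coe_natCast]
    have := (lipschitz_infDist_pt sᶜ).dist_le_mul x y
    rw [NNReal.coe_one, one_mul] at this
    exact mul_le_mul_of_nonneg_left this k.cast_nonneg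
  exact (h.const_min 1).const_max 0

theorem eq_zero_of_le (h : k * infDist x sᶜ ≤ 1) : distCutoff s k x = 0 :=
  max_eq_left (min_le_of_right_le (by linarith))

theorem eq_one_of_le (h : 2 ≤ k * infDist x sᶜ) : distCutoff s k x = 1 := by
  rw [distCutoff, min_eq_left (by linarith), max_eq_right zero_le_one]

theorem eq_zero_of_notMem (h : x ∉ s) : distCutoff s k x = 0 :=
  eq_zero_of_le (by simp [infDist_zero_of_mem (show x ∈ sᶜ from h)])

theorem eventually_eq_one (h : 0 < infDist x sᶜ) : ∀ᶠ k : ℕ in atTop, distCutoff s k x = 1 := by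
  filter_upwards [eventually_ge_atTop ⌈2 / infDist x sᶜ⌉₊] with k hk
  apply eq_one_of_le
  rw [← div_le_iff₀ h]; exact Nat.ceil_le.1 hk

theorem nonneg : 0 ≤ distCutoff s k x := le_max_left _ _

theorem le_one : distCutoff s k x ≤ 1 := max_le zero_le_one (min_le_left _ _)

theorem hasCompactSupport [ProperSpace X] (hs : Bornology.IsBounded s) :
    HasCompactSupport (distCutoff s k) :=
  HasCompactSupport.intro' hs.isCompact_closure isClosed_closure
    fun _ hx => eq_zero_of_notMem fun h => hx (subset_closure h)

theorem tendsto_setIntegral_mul [MeasurableSpace X] [OpensMeasurableSpace X] {μ : Measure X}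
    (hso : IsOpen s) (hsu : s ≠ univ) {u : X → ℝ} (hu : IntegrableOn u s μ) :
    Tendsto (fun k : ℕ => ∫ x in s, distCutoff s k x * u x ∂μ) atTop (𝓝 (∫ x in s, u x ∂μ)) := by
  refine tendsto_integral_of_dominated_convergence (fun x => ‖u x‖)
    (fun k => lipschitzWith.continuous.aestronglyMeasurable.mul hu.aestronglyMeasurable) hu.norm
    (fun k => .of_forall fun x => ?_) ?_
  · rw [norm_mul, Real.norm_of_nonneg nonneg]
    exact mul_le_of_le_one_left (norm_nonneg _) le_one
  · filter_upwards [ae_restrict_mem hso.measurableSet] with x hx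
    refine tendsto_const_nhds.congr' ?_
    filter_upwards [eventually_eq_one (hso.infDist_compl_pos hsu hx)] with k hk
    rw [hk, one_mul]

end PseudoMetricSpace

section NormedSpace
variable {E : Type*} [NormedAddCommGroup E] [NormedSpace ℝ E] {s : Set E} {k : ℕ} {x : E}

theorem lineDeriv_eq_zero (h : k * infDist x sᶜ < 1 ∨ 2 < k * infDist x sᶜ) (v : E) :
    lineDeriv ℝ (distCutoff s k) x v = 0 := by
  obtain ⟨c, hc⟩ : ∃ c : ℝ, distCutoff s k =ᶠ[𝓝 x] fun _ => c := by
    have hcont : Continuous fun y => k * infDist y sᶜ :=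
      continuous_const.mul (continuous_infDist_pt _)
    rcases h with h | h
    · exact ⟨0, (hcont.continuousAt.eventually_lt continuousAt_const h).mono
        fun y hy => eq_zero_of_le hy.le⟩
    · exact ⟨1, (continuousAt_const.eventually_lt hcont.continuousAt h).mono
        fun y hy => eq_one_of_le hy.le⟩
  rw [hc.lineDeriv_eq]; simp [lineDeriv]

theorem lineDeriv_eq_zero_of_notMem (h : x ∉ s) (v : E) :
    lineDeriv ℝ (distCutoff s k) x v = 0 :=
  lineDeriv_eq_zero (.inl (by simp [infDist_zero_of_mem (show x ∈ sᶜ from h)])) v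

theorem eventually_lineDeriv_eq_zero (h : 0 < infDist x sᶜ) (v : E) :
    ∀ᶠ k : ℕ in atTop, lineDeriv ℝ (distCutoff s k) x v = 0 := by
  filter_upwards [eventually_gt_atTop ⌈2 / infDist x sᶜ⌉₊] with k hk
  refine lineDeriv_eq_zero (.inr ?_) v
  rw [← div_lt_iff₀ h]; exact Nat.lt_of_ceil_lt hk

theorem abs_lineDeriv_mul_le {F : E → ℝ} {K : ℝ} (hK : 0 ≤ K) (hF : |F x| ≤ K * infDist x sᶜ)
    (v : E) : |lineDeriv ℝ (distCutoff s k) x v * F x| ≤ 2 * K * ‖v‖ := by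
  by_cases h : 2 < k * infDist x sᶜ
  · simp [lineDeriv_eq_zero (.inr h) v]; positivity
  have hθ : |lineDeriv ℝ (distCutoff s k) x v| ≤ k * ‖v‖ := by
    simpa using norm_lineDeriv_le_of_lipschitz ℝ (lipschitzWith (s := s) (k := k)) (x₀ := x)
      (v := v)
  calc |lineDeriv ℝ (distCutoff s k) x v * F x| ≤ (k * ‖v‖) * (K * infDist x sᶜ) := by
        rw [abs_mul]; exact mul_le_mul hθ hF (abs_nonneg _) (by positivity)
    _ = K * ‖v‖ * (k * infDist x sᶜ) := by ring
    _ ≤ K * ‖v‖ * 2 := by gcongr; linarith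
    _ = 2 * K * ‖v‖ := by ring

theorem tendsto_setIntegral_lineDeriv_mul [MeasurableSpace E] [OpensMeasurableSpace E]
    {μ : Measure E} (hso : IsOpen s) (hsu : s ≠ univ) (hsμ : μ s ≠ ⊤) {F : E → ℝ}
    (hF : Continuous F) {K : ℝ} (hK0 : 0 ≤ K) (hK : ∀ x ∈ s, |F x| ≤ K * infDist x sᶜ) (v : E) :
    Tendsto (fun k : ℕ => ∫ x in s, lineDeriv ℝ (distCutoff s k) x v * F x ∂μ) atTop (𝓝 0) := by
  have : IsFiniteMeasure (μ.restrict s) := isFiniteMeasure_restrict.2 hsμ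
  rw [← integral_zero]
  refine tendsto_integral_of_dominated_convergence (fun _ => 2 * K * ‖v‖)
    (fun k => (aestronglyMeasurable_lineDeriv lipschitzWith.continuous _).mul
      hF.aestronglyMeasurable) (integrable_const _) (fun k => ?_) ?_
  · filter_upwards [ae_restrict_mem hso.measurableSet] with x hx
    exact abs_lineDeriv_mul_le hK0 (hK x hx) v
  · filter_upwards [ae_restrict_mem hso.measurableSet] with x hx
    refine tendsto_const_nhds.congr' ?_
    filter_upwards [eventually_lineDeriv_eq_zero (hso.infDist_compl_pos hsu hx) v] with k hk
    rw [hk, zero_mul]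

end NormedSpace
end distCutoff

section FiniteDimensional

variable {E : Type*} [NormedAddCommGroup E] [NormedSpace ℝ E] [FiniteDimensional ℝ E]

theorem exists_abs_le_mul_infDist_compl {Ω : Set E} (hΩb : Bornology.IsBounded Ω) (hΩ : Ω ≠ univ)
    {F : E → ℝ} (hF : ContDiff ℝ 1 F) (hF0 : ∀ x ∈ frontier Ω, F x = 0) :
    ∃ K : NNReal, ∀ x ∈ Ω, |F x| ≤ K * infDist x Ωᶜ := by
  obtain ⟨R, hR⟩ := hΩb.subset_closedBall 0
  have hcl : closure Ω ⊆ closedBall 0 R := closure_minimal hR isClosed_closedBall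
  obtain ⟨K, hK⟩ := hF.contDiffOn.exists_lipschitzOnWith one_ne_zero (convex_closedBall 0 R)
    (isCompact_closedBall 0 R)
  refine ⟨K, fun x hx => ?_⟩
  obtain ⟨y, hy, hxy⟩ := exists_mem_frontier_infDist_compl_eq_dist hx hΩ
  have := hK.dist_le_mul x (hR hx) y (hcl (frontier_subset_closure hy))
  rwa [Real.dist_eq, hF0 y hy, sub_zero, ← hxy] at this

variable [MeasurableSpace E] [BorelSpace E] {μ : Measure E} [μ.IsAddHaarMeasure]

theorem integral_lineDeriv_mul_eq_neg_integral_mul_fderiv {C : NNReal} {φ u : E → ℝ}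
    (hφ : LipschitzWith C φ) (hφc : HasCompactSupport φ) (hu : ContDiff ℝ 1 u) (v : E) :
    ∫ x, lineDeriv ℝ φ x v * u x ∂μ = -∫ x, φ x * fderiv ℝ u x v ∂μ := by
  obtain ⟨R, hR, hφR⟩ := hφc.isCompact.isBounded.subset_ball_lt 0 0
  -- Mathlib's integration by parts wants both factors Lipschitz: replace `u` by `w = χ u`,
  -- which agrees with `u` near `tsupport φ`.
  let χ : ContDiffBump (0 : E) := ⟨R, R + 1, hR, by linarith⟩
  let w : E → ℝ := fun x => χ x * u x
  have hwc : HasCompactSupport w := χ.hasCompactSupport.mul_right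
  obtain ⟨D, hw⟩ := ContDiff.lipschitzWith_of_hasCompactSupport hwc (χ.contDiff.mul hu) one_ne_zero
  have hwu {x : E} (hx : x ∈ ball (0 : E) R) : w =ᶠ[𝓝 x] u := by
    filter_upwards [isOpen_ball.mem_nhds hx] with y hy
    simp [w, χ.one_of_mem_closedBall (ball_subset_closedBall hy)]
  calc ∫ x, lineDeriv ℝ φ x v * u x ∂μ = ∫ x, lineDeriv ℝ φ x v * w x ∂μ := by
        congr 1 with x
        by_cases hx : x ∈ ball (0 : E) R
        · rw [(hwu hx).eq_of_nhds]
        · rw [(notMem_tsupport_iff_eventuallyEq.1 fun h => hx (hφR h)).lineDeriv_eq]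
          simp [lineDeriv]
    _ = ∫ x, lineDeriv ℝ w x (-v) * φ x ∂μ := hφ.integral_lineDeriv_mul_eq hw hwc v
    _ = -∫ x, φ x * fderiv ℝ u x v ∂μ := by
        rw [← integral_neg]
        congr 1 with x
        by_cases hx : φ x = 0
        · simp [hx]
        · have hxR := hφR (subset_tsupport _ hx)
          rw [(hwu hxR).lineDeriv_eq,
            ((hu.differentiable one_ne_zero) x).lineDeriv_eq_fderiv, map_neg]
          ring

theorem setIntegral_fderiv_eq_zero_of_eq_zero_on_frontier {Ω : Set E} (hΩo : IsOpen Ω)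
    (hΩb : Bornology.IsBounded Ω) {F : E → ℝ} (hF : ContDiff ℝ 1 F)
    (hF0 : ∀ x ∈ frontier Ω, F x = 0) (v : E) : ∫ x in Ω, fderiv ℝ F x v ∂μ = 0 := by
  rcases eq_or_ne v 0 with rfl | hv
  · simp
  have : Nontrivial E := ⟨⟨v, 0, hv⟩⟩
  have hΩu : Ω ≠ univ := fun h => NormedSpace.unbounded_univ ℝ E (h ▸ hΩb)
  obtain ⟨K, hK⟩ := exists_abs_le_mul_infDist_compl hΩb hΩu hF hF0
  have hparts (k : ℕ) : ∫ x in Ω, distCutoff Ω k x * fderiv ℝ F x v ∂μ =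
      -∫ x in Ω, lineDeriv ℝ (distCutoff Ω k) x v * F x ∂μ := by
    rw [setIntegral_eq_integral_of_forall_compl_eq_zero fun x hx => by
        simp [distCutoff.eq_zero_of_notMem hx],
      setIntegral_eq_integral_of_forall_compl_eq_zero fun x hx => by
        simp [distCutoff.lineDeriv_eq_zero_of_notMem hx],
      integral_lineDeriv_mul_eq_neg_integral_mul_fderiv distCutoff.lipschitzWith
        (distCutoff.hasCompactSupport hΩb) hF, neg_neg]
  have hF' : Continuous fun x => fderiv ℝ F x v :=
    (hF.continuous_fderiv one_ne_zero).clm_apply continuous_const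
  have hleft := distCutoff.tendsto_setIntegral_mul hΩo hΩu
    (hF'.integrableOn_of_isBounded (μ := μ) hΩb)
  have hright := distCutoff.tendsto_setIntegral_lineDeriv_mul hΩo hΩu
    (hΩb.measure_lt_top (μ := μ)).ne hF.continuous K.coe_nonneg hK v
  exact tendsto_nhds_unique (hleft.congr hparts) (by simpa using hright.neg)

end FiniteDimensional

theorem integral_mul_le_sqrt_mul_sqrt {α : Type*} [MeasurableSpace α] {μ : Measure α}
    {f g : α → ℝ} (hf : MemLp f 2 μ) (hg : MemLp g 2 μ) :
    ∫ x, f x * g x ∂μ ≤ √(∫ x, f x ^ 2 ∂μ) * √(∫ x, g x ^ 2 ∂μ) := by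
  have h2 : ENNReal.ofReal 2 = 2 := by norm_num
  calc ∫ x, f x * g x ∂μ ≤ ∫ x, ‖f x‖ * ‖g x‖ ∂μ := by
        refine integral_mono (hf.integrable_mul hg) (hf.norm.integrable_mul hg.norm) fun x => ?_
        rw [← norm_mul]; exact le_abs_self _
    _ ≤ (∫ x, ‖f x‖ ^ (2 : ℝ) ∂μ) ^ (1 / 2 : ℝ) * (∫ x, ‖g x‖ ^ (2 : ℝ) ∂μ) ^ (1 / 2 : ℝ) :=
        integral_mul_norm_le_Lp_mul_Lq .two_two (h2 ▸ hf) (h2 ▸ hg)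
    _ = √(∫ x, f x ^ 2 ∂μ) * √(∫ x, g x ^ 2 ∂μ) := by
        simp [Real.sqrt_eq_rpow]

section Laplacian

variable {n : ℕ} {g : (Fin n → ℝ) → ℝ}

theorem ContDiff.fderiv_apply_single {m : ℕ∞} (hg : ContDiff ℝ (m + 1) g) (i : Fin n) :
    ContDiff ℝ m fun x => fderiv ℝ g x (Pi.single i 1) :=
  (hg.fderiv_right le_rfl).clm_apply contDiff_const

theorem ContDiff.laplacian {m : ℕ∞} (hg : ContDiff ℝ (m + 2) g) : ContDiff ℝ m (laplacian g) := by
  rw [← one_add_one_eq_two, ← add_assoc] at hg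
  exact ContDiff.sum fun i _ => (hg.fderiv_apply_single i).fderiv_apply_single i

theorem fderiv_mul_fderiv_apply_single (hg : ContDiff ℝ 2 g) (i : Fin n) (x : Fin n → ℝ) :
    fderiv ℝ (fun y => g y * fderiv ℝ g y (Pi.single i 1)) x (Pi.single i 1) =
      fderiv ℝ g x (Pi.single i 1) ^ 2 +
        g x * fderiv ℝ (fun y => fderiv ℝ g y (Pi.single i 1)) x (Pi.single i 1) := by
  have hgi : ContDiff ℝ 1 fun y => fderiv ℝ g y (Pi.single i 1) := hg.fderiv_apply_single (m := 1) i
  rw [fderiv_fun_mul ((hg.differentiable two_ne_zero) x) ((hgi.differentiable one_ne_zero) x)]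
  simp only [add_apply, smul_apply, smul_eq_mul]
  ring

theorem integral_sum_sq_fderiv_eq_neg_integral_mul_laplacian {Ω : Set (Fin n → ℝ)}
    (hΩo : IsOpen Ω) (hΩb : Bornology.IsBounded Ω) (hg : ContDiff ℝ 2 g)
    (hg0 : ∀ x ∈ frontier Ω, g x = 0) :
    ∫ x in Ω, ∑ i, fderiv ℝ g x (Pi.single i 1) ^ 2 = -∫ x in Ω, g x * laplacian g x := by
  have hgi (i : Fin n) : ContDiff ℝ 1 fun y => fderiv ℝ g y (Pi.single i 1) :=
    hg.fderiv_apply_single (m := 1) i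
  have hFi (i : Fin n) : ContDiff ℝ 1 fun y => g y * fderiv ℝ g y (Pi.single i 1) :=
    (hg.of_le one_le_two).mul (hgi i)
  have hdiv : ∫ x in Ω, ∑ i, fderiv ℝ (fun y => g y * fderiv ℝ g y (Pi.single i 1)) x
      (Pi.single i 1) = 0 := by
    rw [integral_finsetSum _ fun i _ => Continuous.integrableOn_of_isBounded
      (((hFi i).continuous_fderiv one_ne_zero).clm_apply continuous_const) hΩb]
    exact Finset.sum_eq_zero fun i _ => setIntegral_fderiv_eq_zero_of_eq_zero_on_frontier hΩo hΩb
      (hFi i) (fun x hx => by simp [hg0 x hx]) _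
  simp only [fderiv_mul_fderiv_apply_single hg, Finset.sum_add_distrib, ← Finset.mul_sum] at hdiv
  rw [integral_add (Continuous.integrableOn_of_isBounded (by fun_prop) hΩb)
    (Continuous.integrableOn_of_isBounded (by fun_prop) hΩb)] at hdiv
  unfold laplacian
  linarith

theorem integral_sq_fderiv_apply_single_le_integral_sum {Ω : Set (Fin n → ℝ)}
    (hΩo : IsOpen Ω) (hΩb : Bornology.IsBounded Ω) (hg : ContDiff ℝ 1 g) (j : Fin n) :
    ∫ x in Ω, fderiv ℝ g x (Pi.single j 1) ^ 2 ≤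
      ∫ x in Ω, ∑ i, fderiv ℝ g x (Pi.single i 1) ^ 2 := by
  have hgi (i : Fin n) : Continuous fun x => fderiv ℝ g x (Pi.single i 1) :=
    (hg.continuous_fderiv one_ne_zero).clm_apply continuous_const
  exact setIntegral_mono_on (Continuous.integrableOn_of_isBounded (by fun_prop) hΩb)
    (Continuous.integrableOn_of_isBounded (by fun_prop) hΩb) hΩo.measurableSet
    fun x _ => Finset.single_le_sum (f := fun i => fderiv ℝ g x (Pi.single i 1) ^ 2)
      (fun i _ => sq_nonneg _) (Finset.mem_univ _)

theorem integral_sum_sq_fderiv_le_sqrt_mul_sqrt {Ω : Set (Fin n → ℝ)} (hΩo : IsOpen Ω)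
    (hΩb : Bornology.IsBounded Ω) (hg : ContDiff ℝ 2 g) (hg0 : ∀ x ∈ frontier Ω, g x = 0) :
    ∫ x in Ω, ∑ i, fderiv ℝ g x (Pi.single i 1) ^ 2 ≤
      √(∫ x in Ω, laplacian g x ^ 2) * √(∫ x in Ω, g x ^ 2) := by
  have hL2 {u : (Fin n → ℝ) → ℝ} (hu : Continuous u) : MemLp u 2 (volume.restrict Ω) :=
    (memLp_two_iff_integrable_sq hu.aestronglyMeasurable).2
      ((hu.pow 2).integrableOn_of_isBounded hΩb)
  calc ∫ x in Ω, ∑ i, fderiv ℝ g x (Pi.single i 1) ^ 2 = ∫ x in Ω, laplacian g x * -g x := by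
        rw [integral_sum_sq_fderiv_eq_neg_integral_mul_laplacian hΩo hΩb hg hg0, ← integral_neg]
        congr 1 with x; ring
    _ ≤ √(∫ x in Ω, laplacian g x ^ 2) * √(∫ x in Ω, (-g x) ^ 2) :=
        integral_mul_le_sqrt_mul_sqrt (hL2 (ContDiff.laplacian (m := 0) hg).continuous)
          (hL2 hg.continuous.neg)
    _ = √(∫ x in Ω, laplacian g x ^ 2) * √(∫ x in Ω, g x ^ 2) := by simp only [neg_sq]

end Laplacian

theorem zk_term_bound_general (n : ℕ) (hn : 0 < n) (Ω : Set (Fin n → ℝ))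
    (hΩopen : IsOpen Ω) (hΩbdd : Bornology.IsBounded Ω)
    (f : (Fin n → ℝ) → ℝ) (hf : ContDiff ℝ 4 f)
    (hΔbd : ∀ x ∈ frontier Ω, laplacian f x = 0)
    (a : ℝ) (ha : 0 < a)
    (hpoincare : ∀ g : (Fin n → ℝ) → ℝ, ContDiff ℝ 1 g →
      (∀ x ∈ frontier Ω, g x = 0) →
      a * ∫ x in Ω, (g x) ^ 2 ≤ ∫ x in Ω, ∑ i, (fderiv ℝ g x (Pi.single i 1)) ^ 2) :
    (∫ x in Ω, (fderiv ℝ (laplacian f) x (Pi.single (⟨0, hn⟩ : Fin n) 1)) ^ 2 ≤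
        ∫ x in Ω, ∑ i, (fderiv ℝ (laplacian f) x (Pi.single i 1)) ^ 2) ∧
    (∫ x in Ω, ∑ i, (fderiv ℝ (laplacian f) x (Pi.single i 1)) ^ 2 ≤
        Real.sqrt (∫ x in Ω, (laplacian (laplacian f) x) ^ 2) *
          Real.sqrt (∫ x in Ω, (laplacian f x) ^ 2)) ∧
    a * ∫ x in Ω, (fderiv ℝ (laplacian f) x (Pi.single (⟨0, hn⟩ : Fin n) 1)) ^ 2 ≤
        ∫ x in Ω, (laplacian (laplacian f) x) ^ 2 := by
  set g := laplacian f
  have hg : ContDiff ℝ 2 g := ContDiff.laplacian (m := 2) hf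
  have hgrad1 := integral_sq_fderiv_apply_single_le_integral_sum hΩopen hΩbdd
    (hg.of_le one_le_two) ⟨0, hn⟩
  have hgrad2 := integral_sum_sq_fderiv_le_sqrt_mul_sqrt hΩopen hΩbdd hg hΔbd
  refine ⟨hgrad1, hgrad2, ?_⟩
  have hsq {u : (Fin n → ℝ) → ℝ} : √(∫ x in Ω, u x ^ 2) ^ 2 = ∫ x in Ω, u x ^ 2 :=
    sq_sqrt (setIntegral_nonneg hΩopen.measurableSet fun x _ => sq_nonneg (u x))
  set P := √(∫ x in Ω, laplacian g x ^ 2)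
  set Q := √(∫ x in Ω, g x ^ 2)
  have hpoin : a * Q ^ 2 ≤ P * Q := by
    rw [hsq]; exact (hpoincare g (hg.of_le one_le_two) hΔbd).trans hgrad2
  -- `P² - a P Q = (P - a Q)² + a (P Q - a Q²)`
  nlinarith [mul_le_mul_of_nonneg_left (hgrad1.trans hgrad2) ha.le, sq_nonneg (P - a * Q),
    mul_nonneg ha.le (sub_nonneg.2 hpoin), hsq (u := laplacian g)]

/-- Estimate (3.6) of Lemma 3.1: control of the Zakharov–Kuznetsov term `Δf_{x₁}`
by the bi-Laplacian, for `f ∈ H⁴(Ω) ∩ H¹₀(Ω)` (here a `C⁴` function vanishing on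
`∂Ω`) with `Δf = 0` on `∂Ω`, assuming the Poincaré inequality
`a‖g‖² ≤ ‖∇g‖²` holds for all `g ∈ H¹₀(Ω)`. -/
theorem zk_term_bound (n : ℕ) (hn : 0 < n) (Ω : Set (Fin n → ℝ))
    (hΩopen : IsOpen Ω) (hΩbdd : Bornology.IsBounded Ω)
    (f : (Fin n → ℝ) → ℝ) (hf : ContDiff ℝ 4 f)
    (hbd : ∀ x ∈ frontier Ω, f x = 0)
    (hΔbd : ∀ x ∈ frontier Ω, laplacian f x = 0)
    (a : ℝ) (ha : 0 < a)
    (hpoincare : ∀ g : (Fin n → ℝ) → ℝ, ContDiff ℝ 1 g →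
      (∀ x ∈ frontier Ω, g x = 0) →
      a * ∫ x in Ω, (g x) ^ 2 ≤ ∫ x in Ω, ∑ i, (fderiv ℝ g x (Pi.single i 1)) ^ 2) :
    (∫ x in Ω, (fderiv ℝ (laplacian f) x (Pi.single (⟨0, hn⟩ : Fin n) 1)) ^ 2 ≤
        ∫ x in Ω, ∑ i, (fderiv ℝ (laplacian f) x (Pi.single i 1)) ^ 2) ∧
    (∫ x in Ω, ∑ i, (fderiv ℝ (laplacian f) x (Pi.single i 1)) ^ 2 ≤
        Real.sqrt (∫ x in Ω, (laplacian (laplacian f) x) ^ 2) *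
          Real.sqrt (∫ x in Ω, (laplacian f x) ^ 2)) ∧
    a * ∫ x in Ω, (fderiv ℝ (laplacian f) x (Pi.single (⟨0, hn⟩ : Fin n) 1)) ^ 2 ≤
        ∫ x in Ω, (laplacian (laplacian f) x) ^ 2 :=
  zk_term_bound_general n hn Ω hΩopen hΩbdd f hf hΔbd a ha hpoincare
end
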